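/- Let a_1, …, a_d, b_1, …, b_d be real numbers, and let m denote the midpoint of the set of medians of the 2d numbers a_1 + b_1, a_1 − b_1, …, a_d + b_d, a_d − b_d (the set of medians being the closed interval of minimizers of t ↦ Σ_{i=1}^d (|a_i + b_i − t| + |a_i − b_i − t|)). Then min_{i=1,…,d} a_i ≤ m ≤ max_{i=1,…,d} a_i. -/

import Mathlib

open Filter Set

/-- The set of medians of a finite family of reals: minimizers of `t ↦ Σ_i |y_i − t|`. -/
def medianSet {ι : Type*} [Fintype ι] (y : ι → ℝ) : Set ℝ :=
  {t | ∀ s : ℝ, ∑ i, |y i - t| ≤ ∑ i, |y i - s|}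

/-- The midpoint of the (closed interval of) medians. -/
noncomputable def midMedian {ι : Type*} [Fintype ι] (y : ι → ℝ) : ℝ :=
  (sInf (medianSet y) + sSup (medianSet y)) / 2

lemma pair_abs (x c : ℝ) : |x + c| + |x - c| = 2 * max |x| |c| := by
  rcases abs_cases (x+c) with ⟨h1,_⟩|⟨h1,_⟩ <;> rcases abs_cases (x-c) with ⟨h2,_⟩|⟨h2,_⟩ <;>
    rcases max_cases |x| |c| with ⟨h3,_⟩|⟨h3,_⟩ <;>
    rcases abs_cases x with ⟨h4,_⟩|⟨h4,_⟩ <;> rcases abs_cases c with ⟨h5,_⟩|⟨h5,_⟩ <;> linarith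

lemma median_continuous {ι : Type*} [Fintype ι] (y : ι → ℝ) :
    Continuous (fun t : ℝ => ∑ i, |y i - t|) := by
  apply continuous_finset_sum
  exact fun i _ => (continuous_const.sub continuous_id).abs

lemma median_nonempty {ι : Type*} [Fintype ι] [Nonempty ι] (y : ι → ℝ) :
    (medianSet y).Nonempty := by
  obtain ⟨i0⟩ := ‹Nonempty ι›
  have hbase : Tendsto (fun t : ℝ => |y i0 - t|) (cocompact ℝ) atTop := by
    rw [cocompact_eq_atBot_atTop, tendsto_sup]
    constructor
    · refine tendsto_atTop_mono (fun t => le_abs_self _) ?_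
      exact (tendsto_atTop_add_const_right _ (y i0) tendsto_neg_atBot_atTop).congr
        fun x => by ring
    · refine tendsto_atTop_mono (f := fun t => t - y i0) (fun t => ?_) ?_
      · rw [abs_sub_comm]; exact le_abs_self _
      · exact tendsto_atTop_add_const_right _ (-(y i0)) tendsto_id
  have hco : Tendsto (fun t : ℝ => ∑ i, |y i - t|) (cocompact ℝ) atTop :=
    tendsto_atTop_mono
      (fun t => Finset.single_le_sum (f := fun i => |y i - t|)
        (fun i _ => abs_nonneg _) (Finset.mem_univ i0)) hbase
  obtain ⟨t, ht⟩ := (median_continuous y).exists_forall_le hco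
  exact ⟨t, ht⟩

lemma median_bddAbove {ι : Type*} [Fintype ι] [Nonempty ι] (y : ι → ℝ) :
    BddAbove (medianSet y) := by
  obtain ⟨i0⟩ := ‹Nonempty ι›
  refine ⟨y i0 + ∑ i, |y i - y i0|, fun t ht => ?_⟩
  have h1 : |y i0 - t| ≤ ∑ i, |y i - t| :=
    Finset.single_le_sum (f := fun i => |y i - t|) (fun i _ => abs_nonneg _) (Finset.mem_univ i0)
  have h2 := ht (y i0)
  have := (abs_le.mp ((h1.trans h2))).1
  linarith [neg_le_abs (y i0 - t), abs_le.mp (le_refl |y i0 - t|)]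

lemma median_bddBelow {ι : Type*} [Fintype ι] [Nonempty ι] (y : ι → ℝ) :
    BddBelow (medianSet y) := by
  obtain ⟨i0⟩ := ‹Nonempty ι›
  refine ⟨y i0 - ∑ i, |y i - y i0|, fun t ht => ?_⟩
  have h1 : |y i0 - t| ≤ ∑ i, |y i - t| :=
    Finset.single_le_sum (f := fun i => |y i - t|) (fun i _ => abs_nonneg _) (Finset.mem_univ i0)
  have h2 := ht (y i0)
  have := (abs_le.mp ((h1.trans h2))).2
  linarith

lemma median_closed {ι : Type*} [Fintype ι] (y : ι → ℝ) :
    IsClosed (medianSet y) := by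
  have : medianSet y = ⋂ s : ℝ, {t | ∑ i, |y i - t| ≤ ∑ i, |y i - s|} := by
    ext t; simp [medianSet, Set.mem_iInter]
  rw [this]
  exact isClosed_iInter fun s =>
    isClosed_le (median_continuous y) continuous_const

lemma pair_sum {d : ℕ} (a b : Fin d → ℝ) (u : ℝ) (i : Fin d) :
    |a i + b i - u| + |a i - b i - u| = 2 * max |a i - u| |b i| := by
  rw [show a i + b i - u = (a i - u) + b i from by ring,
    show a i - b i - u = (a i - u) - b i from by ring, pair_abs]

lemma reflect_mem {d : ℕ} (a b : Fin d → ℝ) (M t : ℝ)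
    (habs : ∀ i, |a i - (2 * M - t)| ≤ |a i - t|)
    (hmem : t ∈ medianSet fun j : Fin d × Bool =>
      if j.2 then a j.1 + b j.1 else a j.1 - b j.1) :
    2 * M - t ∈ medianSet fun j : Fin d × Bool =>
      if j.2 then a j.1 + b j.1 else a j.1 - b j.1 := by
  intro s
  refine le_trans ?_ (hmem s)
  rw [Fintype.sum_prod_type, Fintype.sum_prod_type]
  refine Finset.sum_le_sum fun i _ => ?_
  simp only [Fintype.sum_bool]
  norm_num
  rw [pair_sum a b, pair_sum a b]
  have : max |a i - (2 * M - t)| |b i| ≤ max |a i - t| |b i| :=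
    max_le_max (habs i) le_rfl
  linarith

/-- **The midpoint of the medians of `a_i ± b_i` lies between `min_i a_i` and `max_i a_i`.**
Here the `2d` numbers `a_1 + b_1, a_1 − b_1, …, a_d + b_d, a_d − b_d` are indexed by
`Fin d × Bool`. -/
theorem stmt14 (d : ℕ) (hd : 0 < d) (a b : Fin d → ℝ) :
    (⨅ i : Fin d, a i) ≤
        midMedian (fun j : Fin d × Bool => if j.2 then a j.1 + b j.1 else a j.1 - b j.1) ∧
    midMedian (fun j : Fin d × Bool => if j.2 then a j.1 + b j.1 else a j.1 - b j.1) ≤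
      ⨆ i : Fin d, a i := by
  haveI : Nonempty (Fin d) := ⟨⟨0, hd⟩⟩
  set y : Fin d × Bool → ℝ := fun j => if j.2 then a j.1 + b j.1 else a j.1 - b j.1 with hy
  have hne := median_nonempty y
  have hba := median_bddAbove y
  have hbb := median_bddBelow y
  have hcl := median_closed y
  have hU : sSup (medianSet y) ∈ medianSet y := hcl.csSup_mem hne hba
  have hL : sInf (medianSet y) ∈ medianSet y := hcl.csInf_mem hne hbb
  have hLU : sInf (medianSet y) ≤ sSup (medianSet y) := csInf_le_csSup hne hbb hba
  set L := sInf (medianSet y)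
  set U := sSup (medianSet y)
  set m := ⨅ i, a i with hm
  set M := ⨆ i, a i with hM
  have hmle : ∀ i, m ≤ a i := fun i => ciInf_le (Set.Finite.bddBelow (Set.finite_range a)) i
  have hMle : ∀ i, a i ≤ M := fun i => le_ciSup (Set.Finite.bddAbove (Set.finite_range a)) i
  constructor
  · -- m ≤ (L + U) / 2
    rcases le_or_gt m L with h | h
    · have : m ≤ U := h.trans hLU
      show m ≤ (L + U) / 2
      linarith
    · have habs : ∀ i, |a i - (2 * m - L)| ≤ |a i - L| := by
        intro i
        have h1 : L ≤ a i := (h.le.trans (hmle i))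
        rw [abs_of_nonneg (by linarith : (0:ℝ) ≤ a i - L), abs_le]
        constructor <;> [skip; linarith [hmle i]]
        linarith [hmle i, h.le]
      have h2 : 2 * m - L ∈ medianSet y := reflect_mem a b m L habs hL
      have h3 : 2 * m - L ≤ U := le_csSup hba h2
      show m ≤ (L + U) / 2
      linarith
  · -- (L + U) / 2 ≤ M
    rcases le_or_gt U M with h | h
    · show (L + U) / 2 ≤ M
      linarith
    · have habs : ∀ i, |a i - (2 * M - U)| ≤ |a i - U| := by
        intro i
        have h1 : a i ≤ U := (hMle i).trans h.le
        rw [abs_of_nonpos (by linarith : a i - U ≤ 0), abs_le]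
        constructor <;> linarith [hMle i, h.le]
      have h2 : 2 * M - U ∈ medianSet y := reflect_mem a b M U habs hU
      have h3 : L ≤ 2 * M - U := csInf_le hbb h2
      show (L + U) / 2 ≤ M
      linarith
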